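/- Let f : X → X be a positively countably-expansive homeomorphism of a compact metric space X. If f is transitive and has the shadowing property, then X is countable. -/

import Mathlib

open Metric

/-- The `n`-th iterate (for `n : ℤ`) of a homeomorphism `f`. -/
def zIter {X : Type*} [TopologicalSpace X] (f : X ≃ₜ X) (n : ℤ) : X → X :=
  fun y => (f.toEquiv ^ n) y

/-- The shadowing property for a homeomorphism `f`. -/
def ShadowingProperty {X : Type*} [MetricSpace X] (f : X ≃ₜ X) : Prop :=
  ∀ ε > (0 : ℝ), ∃ δ > (0 : ℝ), ∀ x : ℤ → X,
    (∀ n : ℤ, dist (f (x n)) (x (n + 1)) < δ) →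
    ∃ y : X, ∀ n : ℤ, dist (zIter f n y) (x n) < ε

/-- The `ε`-stable set of `x`. -/
def stableSetE {X : Type*} [MetricSpace X] (f : X → X) (ε : ℝ) (x : X) : Set X :=
  {y : X | ∀ n : ℕ, dist (f^[n] y) (f^[n] x) ≤ ε}

/-- `f` is positively countably-expansive. -/
def PosCountablyExpansive {X : Type*} [MetricSpace X] (f : X → X) : Prop :=
  ∃ ε > (0 : ℝ), ∀ x : X, (stableSetE f ε x).Countable

/-- `f` is transitive: for any pair of nonempty open sets `U, V` there is `n ∈ ℕ` with
`fⁿ(U) ∩ V ≠ ∅`. -/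
def TransitiveMap {X : Type*} [TopologicalSpace X] (f : X → X) : Prop :=
  ∀ U V : Set X, IsOpen U → IsOpen V → U.Nonempty → V.Nonempty →
    ∃ n : ℕ, (f^[n] '' U ∩ V).Nonempty

/-! ### Auxiliary material for the proof -/

set_option linter.unusedSectionVars false
set_option linter.unusedVariables false
set_option maxHeartbeats 1000000

namespace PCEAux

theorem zIter_succ {X : Type*} [TopologicalSpace X] (f : X ≃ₜ X) (n : ℤ) (y : X) :
    zIter f (n+1) y = f (zIter f n y) := by
  have : f.toEquiv ^ (n+1) = f.toEquiv * f.toEquiv ^ n := by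
    rw [add_comm, zpow_add, zpow_one]
  simp only [zIter, this, Equiv.Perm.mul_apply]
  rfl

theorem zIter_natCast {X : Type*} [TopologicalSpace X] (f : X ≃ₜ X) (n : ℕ) (y : X) :
    zIter f (n : ℤ) y = f^[n] y := by
  induction n with
  | zero => rfl
  | succ k ih =>
    have : ((k+1 : ℕ) : ℤ) = (k : ℤ) + 1 := by push_cast; ring
    rw [this, zIter_succ, ih, Function.iterate_succ_apply']

theorem zIter_add_nat {X : Type*} [TopologicalSpace X] (f : X ≃ₜ X) (m : ℤ) (k : ℕ) (y : X) :
    zIter f (m + (k:ℤ)) y = f^[k] (zIter f m y) := by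
  induction k with
  | zero => simp
  | succ j ih =>
    have : m + ((j+1:ℕ) : ℤ) = (m + (j:ℤ)) + 1 := by push_cast; ring
    rw [this, zIter_succ, ih, Function.iterate_succ_apply']

theorem not_countable_funBool : ¬ Countable (ℕ → Bool) := by
  intro h
  obtain ⟨e, he⟩ := Countable.exists_injective_nat (ℕ → Bool)
  classical
  have hχ : Function.Injective (fun S : Set ℕ => (fun n => decide (n ∈ S))) := by
    intro S S' h
    ext n
    have := congrFun h n
    simpa using this
  exact Function.cantor_injective (e ∘ _) (he.comp hχ)

theorem stableSetE_mono {X : Type*} [MetricSpace X] (f : X → X) {ε₁ ε₂ : ℝ} (h : ε₁ ≤ ε₂)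
    (x : X) : stableSetE f ε₁ x ⊆ stableSetE f ε₂ x :=
  fun y hy n => le_trans (hy n) h

section
variable {X : Type*} [MetricSpace X] [CompactSpace X]

/-- transitivity + an isolated point forces `X` to be a finite orbit, hence countable. -/
theorem countable_of_isolated (f : X ≃ₜ X) (htrans : TransitiveMap (⇑f)) (x : X)
    (hx : IsOpen ({x} : Set X)) : Countable X := by
  obtain ⟨n, hn⟩ := htrans {f x} {x} (Set.image_singleton ▸ f.isOpenMap _ hx) hx
    ⟨f x, rfl⟩ ⟨x, rfl⟩
  obtain ⟨y, ⟨u, hu, hyu⟩, hy⟩ := hn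
  rw [Set.mem_singleton_iff] at hu hy
  subst hu
  have hper : f^[n+1] x = x := by
    rw [Function.iterate_succ_apply]
    rw [hy] at hyu; exact hyu
  set k := n + 1 with hk
  have hkpos : 0 < k := Nat.succ_pos n
  have hmod : ∀ m : ℕ, f^[m] x = f^[m % k] x := by
    intro m
    conv_lhs => rw [← Nat.mod_add_div m k]
    rw [Function.iterate_add_apply]
    congr 1
    generalize m / k = q
    induction q with
    | zero => rfl
    | succ j ih =>
      have : k * (j + 1) = k * j + k := by ring
      rw [this, Function.iterate_add_apply, hper, ih]
  set O : Set X := (fun j => f^[j] x) '' (Set.Iio k) with hO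
  have hOfin : O.Finite := (Set.finite_Iio k).image _
  have hdense : ∀ z : X, z ∈ closure O := by
    intro z
    rw [_root_.mem_closure_iff]
    intro o ho hzo
    obtain ⟨m, hm⟩ := htrans {x} o hx ho ⟨x, rfl⟩ ⟨z, hzo⟩
    obtain ⟨w, ⟨u, hu, hwu⟩, hw⟩ := hm
    rw [Set.mem_singleton_iff] at hu; subst hu
    refine ⟨w, hw, ?_⟩
    rw [← hwu, hmod m]
    exact ⟨m % k, Nat.mod_lt _ hkpos, rfl⟩
  have hsub : (Set.univ : Set X) ⊆ O := by
    intro z _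
    have := hdense z
    rwa [hOfin.isClosed.closure_eq] at this
  have : (Set.univ : Set X).Countable := (hOfin.subset hsub).countable
  exact Set.countable_univ_iff.mp this

/-- Existence of a point with dense forward orbit. -/
theorem exists_dense_orbit (f : X ≃ₜ X) (htrans : TransitiveMap (⇑f)) [Nonempty X] :
    ∃ P : X, ∀ W : Set X, IsOpen W → W.Nonempty → ∃ n : ℕ, f^[n] P ∈ W := by
  obtain ⟨b, hbc, hbne, hb⟩ := TopologicalSpace.exists_countable_basis X
  set S : Set (Set X) := (fun U => ⋃ n : ℕ, (f^[n]) ⁻¹' U) '' b with hS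
  have hSc : S.Countable := hbc.image _
  have hSopen : ∀ s ∈ S, IsOpen s := by
    rintro s ⟨U, hU, rfl⟩
    exact isOpen_iUnion fun n => (hb.isOpen hU).preimage (f.continuous.iterate n)
  have hSdense : ∀ s ∈ S, Dense s := by
    rintro s ⟨U, hU, rfl⟩
    rw [dense_iff_inter_open]
    intro V hV hVne
    have hUne : U.Nonempty := Set.nonempty_iff_ne_empty.mpr (by rintro rfl; exact hbne hU)
    obtain ⟨n, y, ⟨v, hv, hvy⟩, hy⟩ := htrans V U hV (hb.isOpen hU) hVne hUne
    exact ⟨v, hv, Set.mem_iUnion.mpr ⟨n, by rw [Set.mem_preimage, hvy]; exact hy⟩⟩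
  have hD : Dense (⋂₀ S) := dense_sInter_of_isOpen hSopen hSc hSdense
  obtain ⟨P, hP⟩ := hD.nonempty
  refine ⟨P, fun W hW hWne => ?_⟩
  obtain ⟨w, hw⟩ := hWne
  obtain ⟨U, hU, hwU, hUW⟩ := hb.exists_subset_of_mem_open hw hW
  have : P ∈ ⋃ n : ℕ, (f^[n]) ⁻¹' U := hP _ ⟨U, hU, rfl⟩
  obtain ⟨n, hn⟩ := Set.mem_iUnion.mp this
  exact ⟨n, hUW hn⟩

/-- If there are no isolated points, every tail of a dense orbit is dense. -/
theorem tail_dense (f : X ≃ₜ X) (P : X)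
    (hP : ∀ W : Set X, IsOpen W → W.Nonempty → ∃ n : ℕ, f^[n] P ∈ W)
    (hiso : ∀ x : X, ¬ IsOpen ({x} : Set X)) :
    ∀ (m : ℕ) (W : Set X), IsOpen W → W.Nonempty → ∃ n, m ≤ n ∧ f^[n] P ∈ W := by
  intro m W hW hWne
  by_contra hc
  push_neg at hc
  have hvis : ∀ n : ℕ, f^[n] P ∈ W → n < m := by
    intro n hn
    by_contra h
    exact hc n (le_of_not_gt h) hn
  set F : Set X := (fun j => f^[j] P) '' (Set.Iio m) with hF
  have hFfin : F.Finite := (Set.finite_Iio m).image _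
  have hWF : W ⊆ F := by
    intro z hz
    have : z ∈ closure F := by
      rw [_root_.mem_closure_iff]
      intro o ho hzo
      obtain ⟨n, hn⟩ := hP (o ∩ W) (ho.inter hW) ⟨z, hzo, hz⟩
      exact ⟨f^[n] P, hn.1, ⟨n, hvis n hn.2, rfl⟩⟩
    rwa [hFfin.isClosed.closure_eq] at this
  obtain ⟨z, hz⟩ := hWne
  have hWfin : W.Finite := hFfin.subset hWF
  have : IsOpen ({z} : Set X) := by
    have hdiff : IsOpen (W \ (W \ {z})) := hW.sdiff (hWfin.diff : (W \ {z}).Finite).isClosed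
    have heq : W \ (W \ {z}) = {z} := by
      ext w
      simp only [Set.mem_diff, Set.mem_singleton_iff]
      constructor
      · rintro ⟨hwW, hw⟩
        by_contra hne
        exact hw ⟨hwW, hne⟩
      · rintro rfl
        exact ⟨hz, fun h => h.2 rfl⟩
    rwa [heq] at hdiff
  exact hiso z this

/-- Backward separation at scale `c`. -/
def BSep (f : X ≃ₜ X) (c : ℝ) (y y' : X) : Prop :=
  ∃ n : ℕ, c < dist (zIter f (-(n:ℤ)) y) (zIter f (-(n:ℤ)) y')

/-- A family that is pairwise backward-separated at scale `2ε` is countable. -/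
theorem caseA (f : X ≃ₜ X) {e ε δ : ℝ} (hε : 0 < ε) (hεe : ε ≤ e)
    (hctbl : ∀ x : X, (stableSetE (⇑f) e x).Countable)
    (hδ : 0 < δ)
    (hsh : ∀ x : ℤ → X, (∀ n : ℤ, dist (f (x n)) (x (n + 1)) < δ) →
      ∃ y : X, ∀ n : ℤ, dist (zIter f n y) (x n) < ε)
    {M : Set X} (hsep : M.Pairwise (BSep f (2*ε))) : M.Countable := by
  by_contra hM
  obtain ⟨δ₁, hδ₁, hδ₁f⟩ := Metric.uniformContinuous_iff.mp
    (CompactSpace.uniformContinuous_of_continuous f.continuous) δ hδ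
  obtain ⟨t, -, htfin, hcov⟩ := finite_cover_balls_of_compact (isCompact_univ (X := X))
    (half_pos hδ₁)
  have : ∃ x ∈ t, ¬ (M ∩ ball x (δ₁/2)).Countable := by
    by_contra hb
    push_neg at hb
    have : M ⊆ ⋃ x ∈ t, (M ∩ ball x (δ₁/2)) := by
      intro y hy
      obtain ⟨x, hx1, hx2⟩ := Set.mem_iUnion₂.mp (hcov (Set.mem_univ y))
      exact Set.mem_iUnion₂.mpr ⟨x, hx1, hy, hx2⟩
    exact hM (Set.Countable.mono this (htfin.countable.biUnion hb))
  obtain ⟨x₀, -, hT⟩ := this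
  set T : Set X := M ∩ ball x₀ (δ₁/2) with hTdef
  have hTM : T ⊆ M := Set.inter_subset_left
  have hTne : T.Nonempty := by
    rcases T.eq_empty_or_nonempty with h | h
    · exact absurd (h ▸ Set.countable_empty) hT
    · exact h
  obtain ⟨y₀, hy₀⟩ := hTne
  set Porb : X → ℤ → X := fun y n => if n ≤ 0 then zIter f n y else zIter f n y₀ with hPdef
  have hPgood : ∀ y ∈ T, ∀ n : ℤ, dist (f (Porb y n)) (Porb y (n+1)) < δ := by
    intro y hy n
    rcases lt_trichotomy n 0 with hn | hn | hn
    · have h1 : n ≤ 0 := le_of_lt hn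
      have h2 : n + 1 ≤ 0 := by omega
      simp only [hPdef, if_pos h1, if_pos h2, ← zIter_succ, dist_self]
      exact hδ
    · subst hn
      have h2 : ¬ ((0:ℤ) + 1 ≤ 0) := by omega
      simp only [hPdef, if_pos le_rfl, if_neg h2]
      have h0 : zIter f 0 y = y := rfl
      rw [h0, zero_add]
      have h1 : zIter f 1 y₀ = f y₀ := by
        have := zIter_succ f 0 y₀; simp only [zero_add] at this; exact this
      rw [h1]
      apply hδ₁f
      calc dist y y₀ ≤ dist y x₀ + dist x₀ y₀ := dist_triangle _ _ _
        _ < δ₁/2 + δ₁/2 := by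
            apply add_lt_add
            · exact mem_ball.mp hy.2
            · exact mem_ball'.mp hy₀.2
        _ = δ₁ := by ring
    · have h1 : ¬ (n ≤ 0) := by omega
      have h2 : ¬ (n + 1 ≤ 0) := by omega
      simp only [hPdef, if_neg h1, if_neg h2, ← zIter_succ, dist_self]
      exact hδ
  classical
  set w : X → X := fun y => if h : ∀ n : ℤ, dist (f (Porb y n)) (Porb y (n+1)) < δ then
    Classical.choose (hsh _ h) else y with hwdef
  have hwspec : ∀ y ∈ T, ∀ n : ℤ, dist (zIter f n (w y)) (Porb y n) < ε := by
    intro y hy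
    have h := hPgood y hy
    simp only [hwdef, dif_pos h]
    exact Classical.choose_spec (hsh _ h)
  have hinj : T.InjOn w := by
    intro y hy y' hy' hww
    by_contra hne
    obtain ⟨n, hn⟩ := hsep (hTM hy) (hTM hy') hne
    have h1 := hwspec y hy (-(n:ℤ))
    have h2 := hwspec y' hy' (-(n:ℤ))
    have hneg : (-(n:ℤ)) ≤ 0 := by omega
    rw [hPdef] at h1 h2
    simp only [if_pos hneg] at h1 h2
    rw [hww] at h1
    have : dist (zIter f (-(n:ℤ)) y) (zIter f (-(n:ℤ)) y') ≤ 2 * ε := by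
      calc dist (zIter f (-(n:ℤ)) y) (zIter f (-(n:ℤ)) y')
          ≤ dist (zIter f (-(n:ℤ)) (w y')) (zIter f (-(n:ℤ)) y)
            + dist (zIter f (-(n:ℤ)) (w y')) (zIter f (-(n:ℤ)) y') := dist_triangle_left _ _ _
        _ ≤ ε + ε := add_le_add (le_of_lt h1) (le_of_lt h2)
        _ = 2 * ε := by ring
    linarith
  have hmaps : Set.MapsTo w T ((⇑f) ⁻¹' (stableSetE (⇑f) e (f y₀))) := by
    intro y hy
    intro n
    have h := hwspec y hy ((n:ℤ)+1)
    have hpos : ¬ ((n:ℤ) + 1 ≤ 0) := by omega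
    rw [hPdef] at h
    simp only [if_neg hpos] at h
    have e1 : zIter f ((n:ℤ)+1) (w y) = f^[n+1] (w y) := by
      have : ((n:ℤ)+1) = ((n+1 : ℕ) : ℤ) := by push_cast; ring
      rw [this, zIter_natCast]
    have e2 : zIter f ((n:ℤ)+1) y₀ = f^[n+1] (y₀) := by
      have : ((n:ℤ)+1) = ((n+1 : ℕ) : ℤ) := by push_cast; ring
      rw [this, zIter_natCast]
    rw [e1, e2] at h
    rw [Function.iterate_succ_apply] at h
    calc dist (f^[n] (f (w y))) (f^[n] (f y₀)) = dist (f^[n+1] (w y)) (f^[n] (f y₀)) := by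
          rw [Function.iterate_succ_apply]
      _ ≤ ε := le_of_lt h
      _ ≤ e := hεe
  have hctble : ((⇑f) ⁻¹' (stableSetE (⇑f) e (f y₀))).Countable :=
    (hctbl (f y₀)).preimage f.injective
  exact hT (hmaps.countable_of_injOn hinj hctble)

/-- The Cantor scheme: from a far pair along an orbit whose gap recurs, plus returns,
build uncountably many points in one stable set. -/
theorem cantor (f : X ≃ₜ X) {ε δ : ℝ} (hε : 0 < ε) (hδ : 0 < δ)
    (hsh : ∀ x : ℤ → X, (∀ n : ℤ, dist (f (x n)) (x (n + 1)) < δ) →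
      ∃ y : X, ∀ n : ℤ, dist (zIter f n y) (x n) < ε)
    (p : ℕ → X) (hp : ∀ n, f (p n) = p (n+1))
    (i g N a₁ a₂ : ℕ) (hg : 1 ≤ g) (hN : 1 ≤ N) (ha₁ : 1 ≤ a₁) (ha₂ : 1 ≤ a₂)
    (hfar : 2*ε ≤ dist (p i) (p (i+g)))
    (hrec : dist (p (i+N+g)) (p (i+N)) < δ)
    (h₁ : dist (p (i+N+a₁)) (p i) < δ)
    (h₂ : dist (p (i+N+a₂)) (p (i+g)) < δ) :
    ∃ z : X, ¬ (stableSetE (⇑f) (2*ε) z).Countable := by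
  classical
  set a : Bool → ℕ := fun b => bif b then a₂ else a₁ with ha
  set tgt : Bool → ℕ := fun b => bif b then i + g else i with htgt
  set L : Bool → ℕ := fun b => a b + N with hL
  set B : Bool → ℕ → X := fun b k => if k < a b then p (i + N + k) else p (tgt b + (k - a b))
    with hB
  have hapos : ∀ b, 1 ≤ a b := by intro b; cases b <;> simpa [ha]
  have hLpos : ∀ b, 1 ≤ L b := by
    intro b
    have h1 := hapos b
    have h2 : L b = a b + N := rfl
    omega
  have hLN : ∀ b, N ≤ L b := by
    intro b
    have h2 : L b = a b + N := rfl
    omega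
  have Bstart : ∀ b, B b 0 = p (i + N) := by
    intro b
    have h0 : (0:ℕ) < a b := hapos b
    simp only [hB, if_pos h0, Nat.add_zero]
  have Boffset : ∀ b, B b (a b) = p (tgt b) := by
    intro b
    simp only [hB, if_neg (lt_irrefl (a b)), Nat.sub_self, Nat.add_zero]
  have Bjump : ∀ b k, k + 1 < L b → dist (f (B b k)) (B b (k+1)) < δ := by
    intro b k hk
    rcases lt_trichotomy (k+1) (a b) with h | h | h
    · have hk1 : k < a b := by omega
      simp only [hB, if_pos h, if_pos hk1, hp]
      have : i + N + k + 1 = i + N + (k+1) := by ring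
      rw [this, dist_self]
      exact hδ
    · have hk1 : k < a b := by omega
      simp only [hB, if_pos hk1, if_neg (by omega : ¬ (k+1 < a b)), hp]
      have e1 : i + N + k + 1 = i + N + a b := by omega
      have e2 : tgt b + (k + 1 - a b) = tgt b := by omega
      rw [e1, e2]
      cases b
      · simpa [ha, htgt] using h₁
      · simpa [ha, htgt] using h₂
    · have hk1 : ¬ (k < a b) := by omega
      simp only [hB, if_neg hk1, if_neg (by omega : ¬ (k+1 < a b)), hp]
      have : tgt b + (k - a b) + 1 = tgt b + (k + 1 - a b) := by omega
      rw [this, dist_self]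
      exact hδ
  have Bwrap : ∀ b, dist (f (B b (L b - 1))) (p (i+N)) < δ := by
    intro b
    have h1 : ¬ (L b - 1 < a b) := by have := hLpos b; simp [hL]; omega
    simp only [hB, if_neg h1, hp]
    have e1 : tgt b + (L b - 1 - a b) + 1 = tgt b + N := by
      have := hapos b; simp [hL]; omega
    rw [e1]
    cases b
    · simp only [htgt, cond_false, dist_self]; exact hδ
    · simp only [htgt, cond_true]
      have : i + g + N = i + N + g := by ring
      rw [this]
      exact hrec
  set T : (ℕ → Bool) → ℕ → ℕ := fun σ => Nat.rec 0 (fun m acc => acc + L (σ m)) with hT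
  have hT0 : ∀ σ, T σ 0 = 0 := fun _ => rfl
  have hTsucc : ∀ σ m, T σ (m+1) = T σ m + L (σ m) := fun _ _ => rfl
  have hTmono : ∀ σ m, T σ m < T σ (m+1) := by
    intro σ m; rw [hTsucc]; have := hLpos (σ m); omega
  have hTmono' : ∀ σ {m m'}, m ≤ m' → T σ m ≤ T σ m' := by
    intro σ m m' h
    induction m' with
    | zero =>
      have : m = 0 := Nat.le_zero.mp h
      subst this; exact le_rfl
    | succ j ih =>
      rcases Nat.eq_or_lt_of_le h with h' | h'
      · exact h' ▸ le_rfl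
      · exact le_trans (ih (Nat.lt_succ_iff.mp h')) (le_of_lt (hTmono σ j))
  have hTge : ∀ σ m, m ≤ T σ m := by
    intro σ m
    induction m with
    | zero => omega
    | succ j ih =>
      have h1 := hTmono σ j
      omega
  have hex : ∀ (σ : ℕ → Bool) (ν : ℕ), ∃ m, ν ≤ T σ (m+1) := by
    intro σ ν
    exact ⟨ν, le_trans (hTge σ ν) (hTmono' σ (Nat.le_succ ν))⟩
  set mloc : (ℕ → Bool) → ℕ → ℕ := fun σ ν => Nat.find (hex σ ν) with hmloc
  have hloc1 : ∀ σ ν, ν ≤ T σ (mloc σ ν + 1) := fun σ ν => Nat.find_spec (hex σ ν)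
  have hloc2 : ∀ σ ν, 1 ≤ ν → T σ (mloc σ ν) < ν := by
    intro σ ν hν
    rcases Nat.eq_zero_or_pos (mloc σ ν) with h | h
    · rw [h, hT0]; omega
    · have := Nat.find_min (hex σ ν) (by omega : mloc σ ν - 1 < mloc σ ν)
      have e : mloc σ ν - 1 + 1 = mloc σ ν := by omega
      rw [e] at this
      omega
  have hloc_unique : ∀ σ ν m, T σ m < ν → ν ≤ T σ (m+1) → mloc σ ν = m := by
    intro σ ν m h1 h2
    have hle : mloc σ ν ≤ m := Nat.find_min' (hex σ ν) h2
    rcases Nat.eq_or_lt_of_le hle with h | h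
    · exact h
    · exfalso
      have h5 : T σ (mloc σ ν + 1) ≤ T σ m := hTmono' σ (Nat.succ_le_of_lt h)
      have h6 := hloc1 σ ν
      omega
  set Q : (ℕ → Bool) → ℤ → X := fun σ n =>
    if 0 ≤ n then p (i + N + n.toNat)
    else B (σ (mloc σ (-n).toNat)) (T σ (mloc σ (-n).toNat + 1) - (-n).toNat) with hQ
  have hQnat : ∀ σ (n : ℕ), Q σ (n : ℤ) = p (i + N + n) := by
    intro σ n
    simp [hQ]
  have hQneg : ∀ σ (ν : ℕ), 1 ≤ ν →
      Q σ (-(ν:ℤ)) = B (σ (mloc σ ν)) (T σ (mloc σ ν + 1) - ν) := by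
    intro σ ν hν
    have h0 : ¬ (0 ≤ -(ν:ℤ)) := by omega
    simp only [hQ, if_neg h0, neg_neg, Int.toNat_natCast]
  have hQpseudo : ∀ σ (n : ℤ), dist (f (Q σ n)) (Q σ (n+1)) < δ := by
    intro σ n
    rcases le_or_gt 0 n with hn | hn
    · obtain ⟨k, rfl⟩ : ∃ k : ℕ, n = (k : ℤ) := ⟨n.toNat, by omega⟩
      have e1 : (k:ℤ) + 1 = ((k+1:ℕ):ℤ) := by push_cast; ring
      rw [hQnat, e1, hQnat, hp]
      have : i + N + k + 1 = i + N + (k+1) := by ring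
      rw [this, dist_self]
      exact hδ
    · obtain ⟨ν, hν1, rfl⟩ : ∃ ν : ℕ, 1 ≤ ν ∧ n = -(ν:ℤ) := by
        refine ⟨(-n).toNat, by omega, by omega⟩
      rcases Nat.eq_or_lt_of_le hν1 with h1 | h1
      · have hν : (1:ℕ) = ν := h1
        subst hν
        rw [hQneg σ 1 le_rfl]
        have hm : mloc σ 1 = 0 := hloc_unique σ 1 0 (by rw [hT0]; omega)
          (by rw [hTsucc, hT0]; have := hLpos (σ 0); omega)
        rw [hm]
        have e1 : T σ (0+1) - 1 = L (σ 0) - 1 := by rw [hTsucc, hT0]; omega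
        rw [e1]
        have e2 : (-(((1:ℕ)):ℤ)) + 1 = ((0:ℕ):ℤ) := by norm_num
        rw [e2, hQnat]
        have e3 : i + N + 0 = i + N := by ring
        rw [e3]
        exact Bwrap (σ 0)
      · have hν2 : 2 ≤ ν := h1
        have e0 : -(ν:ℤ) + 1 = -((ν-1 : ℕ):ℤ) := by push_cast; omega
        rw [e0, hQneg σ ν (by omega), hQneg σ (ν-1) (by omega)]
        set m := mloc σ ν with hm
        have hm1 : T σ m < ν := hloc2 σ ν (by omega)
        have hm2 : ν ≤ T σ (m+1) := hloc1 σ ν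
        by_cases hb : T σ m < ν - 1
        · have hmeq : mloc σ (ν-1) = m := hloc_unique σ (ν-1) m hb (by omega)
          rw [hmeq]
          have e1 : T σ (m+1) - (ν-1) = (T σ (m+1) - ν) + 1 := by omega
          rw [e1]
          apply Bjump
          rw [hTsucc] at hm2 ⊢
          omega
        · have hνm : ν - 1 = T σ m := by omega
          have hmpos : 1 ≤ m := by
            by_contra hc
            have : m = 0 := by omega
            rw [this, hT0] at hνm
            omega
          have hmeq : mloc σ (ν-1) = m - 1 := by
            apply hloc_unique
            · have h7 : T σ (m-1) < T σ m := by
                have h8 := hTmono σ (m-1)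
                have e : m - 1 + 1 = m := by omega
                rwa [e] at h8
              omega
            · have e : m - 1 + 1 = m := by omega
              rw [e]; omega
          rw [hmeq]
          have e1 : T σ (m-1+1) - (ν-1) = 0 := by
            have e : m - 1 + 1 = m := by omega
            rw [e]; omega
          rw [e1, Bstart]
          have e2 : T σ (m+1) - ν = L (σ m) - 1 := by
            rw [hTsucc]; omega
          rw [e2]
          exact Bwrap (σ m)
  set z : (ℕ → Bool) → X := fun σ => Classical.choose (hsh (Q σ) (hQpseudo σ)) with hz
  have hzspec : ∀ σ (n : ℤ), dist (zIter f n (z σ)) (Q σ n) < ε := by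
    intro σ
    exact Classical.choose_spec (hsh (Q σ) (hQpseudo σ))
  refine ⟨z (fun _ => false), fun hcount => ?_⟩
  have hmem : ∀ σ, z σ ∈ stableSetE (⇑f) (2*ε) (z (fun _ => false)) := by
    intro σ n
    have h1 := hzspec σ (n : ℤ)
    have h2 := hzspec (fun _ => false) (n : ℤ)
    rw [hQnat] at h1 h2
    rw [zIter_natCast] at h1 h2
    calc dist (f^[n] (z σ)) (f^[n] (z (fun _ => false)))
        ≤ dist (f^[n] (z σ)) (p (i+N+n)) + dist (p (i+N+n)) (f^[n] (z (fun _ => false))) :=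
          dist_triangle _ _ _
      _ ≤ ε + ε := add_le_add (le_of_lt h1) (le_of_lt (by rw [dist_comm]; exact h2))
      _ = 2*ε := by ring
  have hTagree : ∀ (σ τ : ℕ → Bool) m, (∀ k < m, σ k = τ k) → T σ m = T τ m := by
    intro σ τ m h
    induction m with
    | zero => rfl
    | succ j ih =>
      rw [hTsucc, hTsucc, ih (fun k hk => h k (by omega)), h j (by omega)]
  have hinj : Function.Injective z := by
    intro σ τ hzz
    by_contra hne
    have hex2 : ∃ m, σ m ≠ τ m := Function.ne_iff.mp hne
    set m := Nat.find hex2 with hmdef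
    have hmne : σ m ≠ τ m := Nat.find_spec hex2
    have hagree : ∀ k < m, σ k = τ k := by
      intro k hk
      by_contra hc
      exact absurd (Nat.find_min' hex2 hc) (by omega)
    have hTeq : T σ m = T τ m := hTagree σ τ m hagree
    set ν : ℕ := T σ m + N with hν
    have hν1 : 1 ≤ ν := by have := hN; omega
    have hlocσ : mloc σ ν = m := by
      apply hloc_unique
      · omega
      · rw [hTsucc]; have := hLN (σ m); omega
    have hlocτ : mloc τ ν = m := by
      apply hloc_unique
      · omega
      · rw [hTsucc]; rw [← hTeq]; have := hLN (τ m); omega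
    have hQσ : Q σ (-(ν:ℤ)) = p (tgt (σ m)) := by
      rw [hQneg σ ν hν1, hlocσ]
      have e : T σ (m+1) - ν = a (σ m) := by rw [hTsucc]; simp only [hL]; omega
      rw [e, Boffset]
    have hQτ : Q τ (-(ν:ℤ)) = p (tgt (τ m)) := by
      rw [hQneg τ ν hν1, hlocτ]
      have e : T τ (m+1) - ν = a (τ m) := by rw [hTsucc]; rw [← hTeq]; simp only [hL]; omega
      rw [e, Boffset]
    have h1 := hzspec σ (-(ν:ℤ))
    have h2 := hzspec τ (-(ν:ℤ))
    rw [hQσ] at h1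
    rw [hQτ, ← hzz] at h2
    have hdist : dist (p (tgt (σ m))) (p (tgt (τ m))) < 2*ε := by
      calc dist (p (tgt (σ m))) (p (tgt (τ m)))
          ≤ dist (zIter f (-(ν:ℤ)) (z σ)) (p (tgt (σ m)))
            + dist (zIter f (-(ν:ℤ)) (z σ)) (p (tgt (τ m))) := dist_triangle_left _ _ _
        _ < ε + ε := add_lt_add h1 h2
        _ = 2*ε := by ring
    have : dist (p i) (p (i+g)) < 2*ε := by
      rcases Bool.eq_false_or_eq_true (σ m) with h | h <;>
        rcases Bool.eq_false_or_eq_true (τ m) with h' | h'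
      · exact absurd (h.trans h'.symm) hmne
      · rw [h, h'] at hdist
        simpa [htgt, dist_comm] using hdist
      · rw [h, h'] at hdist
        simpa [htgt] using hdist
      · exact absurd (h.trans h'.symm) hmne
    linarith
  have : Countable (ℕ → Bool) := by
    have h1 : Set.range z ⊆ stableSetE (⇑f) (2*ε) (z (fun _ => false)) := by
      rintro _ ⟨σ, rfl⟩; exact hmem σ
    have h2 : (Set.range z).Countable := hcount.mono h1
    have := h2.to_subtype
    exact Countable.of_equiv _ (Equiv.ofInjective z hinj).symm
  exact not_countable_funBool this

end

end PCEAux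

open PCEAux

/-- A positively countably-expansive, transitive homeomorphism of a compact metric space
with the shadowing property can only be defined on a countable space. -/
theorem posCountablyExpansive_transitive_shadowing_countable {X : Type*} [MetricSpace X]
    [CompactSpace X] (f : X ≃ₜ X) (hce : PosCountablyExpansive (⇑f))
    (htrans : TransitiveMap (⇑f)) (hshad : ShadowingProperty f) :
    Countable X := by
  by_contra hX
  -- X is nonempty
  have hne : Nonempty X := by
    by_contra h
    rw [not_nonempty_iff] at h
    exact hX (Subsingleton.to_countable)
  obtain ⟨e, he, hceset⟩ := hce
  -- no isolated points
  have hiso : ∀ x : X, ¬ IsOpen ({x} : Set X) := by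
    intro x hx
    exact hX (countable_of_isolated f htrans x hx)
  obtain ⟨P, hP⟩ := exists_dense_orbit f htrans
  have htail := tail_dense f P hP hiso
  set p : ℕ → X := fun n => f^[n] P with hpdef
  have hp : ∀ n, f (p n) = p (n+1) := by
    intro n
    simp only [hpdef]
    rw [Function.iterate_succ_apply']
  -- constants
  set ε : ℝ := e/32 with hεdef
  set θ : ℝ := e/8 with hθdef
  have hε : 0 < ε := by rw [hεdef]; linarith
  have hθ : 0 < θ := by rw [hθdef]; linarith
  have hεe : ε ≤ e := by rw [hεdef]; linarith
  obtain ⟨δ, hδ, hsh⟩ := hshad ε hε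
  -- Zorn : a maximal backward-(2ε)-separated family
  obtain ⟨M, hMmax⟩ := zorn_subset {T : Set X | T.Pairwise (BSep f (2*ε))} (by
    intro c hc hchain
    refine ⟨⋃₀ c, ?_, fun s hs => Set.subset_sUnion_of_mem hs⟩
    intro y hy y' hy' hne
    obtain ⟨T₁, hT₁, hyT₁⟩ := hy
    obtain ⟨T₂, hT₂, hyT₂⟩ := hy'
    rcases eq_or_ne T₁ T₂ with rfl | hTT
    · exact (hc hT₁) hyT₁ hyT₂ hne
    · rcases hchain hT₁ hT₂ hTT with h | h
      · exact (hc hT₂) (h hyT₁) hyT₂ hne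
      · exact (hc hT₁) hyT₁ (h hyT₂) hne)
  have hMsep : M.Pairwise (BSep f (2*ε)) := hMmax.1
  have hMc : M.Countable := caseA f hε hεe hceset hδ hsh hMsep
  -- every point is backward-2ε-close to some point of M
  have hcov : ∀ x : X, ∃ s ∈ M,
      ∀ n : ℕ, dist (zIter f (-(n:ℤ)) x) (zIter f (-(n:ℤ)) s) ≤ 2*ε := by
    intro x
    by_contra hcon
    push_neg at hcon
    have hxM : x ∉ M := by
      intro hxM
      obtain ⟨n, hn⟩ := hcon x hxM
      rw [dist_self] at hn
      linarith
    have hins : (insert x M) ∈ {T : Set X | T.Pairwise (BSep f (2*ε))} := by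
      have hsymm : Symmetric (BSep f (2*ε)) := by
        intro u v ⟨n, hn⟩
        exact ⟨n, by rwa [dist_comm]⟩
      haveI : Std.Symm (BSep f (2*ε)) := ⟨fun u v h => hsymm h⟩
      rw [Set.mem_setOf_eq, Set.pairwise_insert_of_symm]
      refine ⟨hMsep, fun s hs hne => ?_⟩
      obtain ⟨n, hn⟩ := hcon s hs
      exact ⟨n, hn⟩
    have := hMmax.2 hins (Set.subset_insert x M)
    exact hxM (this (Set.mem_insert x M))
  -- dichotomy
  by_cases hI : ∃ g : ℕ, (1 ≤ g ∧ dist (p 0) (p g) < δ/3) ∧ ∃ x : X, θ < dist (f^[g] x) x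
  · -- Case I : a far pair whose gap recurs; run the Cantor scheme
    obtain ⟨g, ⟨hg1, hgrec⟩, x, hx⟩ := hI
    have hA : IsOpen {y : X | θ < dist (f^[g] y) y} :=
      isOpen_lt continuous_const ((f.continuous.iterate g).dist continuous_id)
    obtain ⟨i, hi1, hi2⟩ := htail 1 _ hA ⟨x, hx⟩
    rw [Set.mem_setOf_eq] at hi2
    have hiter : ∀ m k : ℕ, f^[k] (p m) = p (m + k) := by
      intro m k
      simp only [hpdef]
      rw [← Function.iterate_add_apply]
      congr 1
      omega
    have hfar : θ < dist (p (i+g)) (p i) := by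
      have : f^[g] (p i) = p (i+g) := hiter i g
      rwa [this] at hi2
    obtain ⟨κ, hκ, hκf⟩ := Metric.uniformContinuous_iff.mp
      (CompactSpace.uniformContinuous_of_continuous (f.continuous.iterate g)) (δ/3)
      (by linarith)
    have hmin : 0 < min κ (δ/3) := lt_min hκ (by linarith)
    obtain ⟨t, ht1, ht2⟩ := htail (i+1) (ball (p 0) (min κ (δ/3))) isOpen_ball
      ⟨p 0, mem_ball_self hmin⟩
    rw [mem_ball] at ht2
    have hrec : dist (p (t+g)) (p t) < δ := by
      have h1 : dist (p t) (p 0) < min κ (δ/3) := ht2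
      have h2 : dist (f^[g] (p t)) (f^[g] (p 0)) < δ/3 := hκf (lt_of_lt_of_le h1 (min_le_left _ _))
      rw [hiter t g, hiter 0 g] at h2
      have h3 : p (0 + g) = p g := by norm_num
      rw [h3] at h2
      calc dist (p (t+g)) (p t)
          ≤ dist (p (t+g)) (p g) + dist (p g) (p 0) + dist (p 0) (p t) := dist_triangle4 _ _ _ _
        _ < δ/3 + δ/3 + δ/3 := by
            apply add_lt_add (add_lt_add h2 (by rw [dist_comm]; exact hgrec))
            rw [dist_comm]
            exact lt_of_lt_of_le h1 (min_le_right _ _)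
        _ = δ := by ring
    obtain ⟨s₁, hs₁1, hs₁2⟩ := htail (t+1) (ball (p i) δ) isOpen_ball ⟨p i, mem_ball_self hδ⟩
    obtain ⟨s₂, hs₂1, hs₂2⟩ := htail (t+1) (ball (p (i+g)) δ) isOpen_ball
      ⟨p (i+g), mem_ball_self hδ⟩
    rw [mem_ball] at hs₁2 hs₂2
    -- apply the Cantor lemma with N = t - i, a₁ = s₁ - t, a₂ = s₂ - t
    have hit : i + (t - i) = t := by omega
    have hts₁ : i + (t - i) + (s₁ - t) = s₁ := by omega
    have hts₂ : i + (t - i) + (s₂ - t) = s₂ := by omega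
    obtain ⟨z, hz⟩ := cantor f hε hδ hsh p hp i g (t-i) (s₁-t) (s₂-t) hg1
      (by omega) (by omega) (by omega)
      (by
        rw [dist_comm] at hfar
        have h2ε : 2*ε ≤ θ := by rw [hεdef, hθdef]; linarith
        linarith)
      (by rw [hit]; exact hrec)
      (by rw [hts₁]; exact hs₁2)
      (by rw [hts₂]; exact hs₂2)
    exact hz ((hceset z).mono (stableSetE_mono (⇑f) (by rw [hεdef]; linarith) z))
  · -- Case II : rigidity; unstable classes are inside stable sets
    push_neg at hI
    apply hX
    set U : X → Set X := fun s =>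
      {y : X | ∀ n : ℕ, dist (zIter f (-(n:ℤ)) y) (zIter f (-(n:ℤ)) s) ≤ 2*ε} with hU
    have hUsub : ∀ s : X, U s ⊆ stableSetE (⇑f) e s := by
      intro s y hy n
      -- find a recurrent gap g ≥ max (n+1) 1
      obtain ⟨g, hgge, hgball⟩ := htail (n+1) (ball (p 0) (δ/3)) isOpen_ball
        ⟨p 0, mem_ball_self (by linarith)⟩
      rw [mem_ball] at hgball
      have hrig : ∀ x : X, dist (f^[g] x) x ≤ θ := by
        intro x
        exact hI g ⟨by omega, by rw [dist_comm]; exact hgball⟩ x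
      have hgn : n ≤ g := by omega
      -- main estimate
      have key : ∀ w : X, f^[n] w = f^[g] (zIter f ((n:ℤ) - (g:ℤ)) w) := by
        intro w
        have h4 := zIter_add_nat f ((n:ℤ) - (g:ℤ)) g w
        rw [show (n:ℤ) - (g:ℤ) + (g:ℤ) = ((n:ℕ):ℤ) by ring] at h4
        rw [zIter_natCast] at h4
        exact h4
      have hmid : (n:ℤ) - (g:ℤ) = -(((g-n : ℕ)):ℤ) := by push_cast; omega
      have hy' := hy (g - n)
      rw [← hmid] at hy'
      calc dist (f^[n] y) (f^[n] s)
          ≤ dist (f^[n] y) (zIter f ((n:ℤ)-(g:ℤ)) y)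
            + dist (zIter f ((n:ℤ)-(g:ℤ)) y) (zIter f ((n:ℤ)-(g:ℤ)) s)
            + dist (zIter f ((n:ℤ)-(g:ℤ)) s) (f^[n] s) := dist_triangle4 _ _ _ _
        _ ≤ θ + 2*ε + θ := by
            apply add_le_add (add_le_add ?_ hy')
            · rw [dist_comm, key s]
              exact hrig _
            · rw [key y]
              exact hrig _
        _ ≤ e := by rw [hεdef, hθdef]; linarith
    have hcover : (Set.univ : Set X) ⊆ ⋃ s ∈ M, U s := by
      intro x _
      obtain ⟨s, hs, hxs⟩ := hcov x
      exact Set.mem_iUnion₂.mpr ⟨s, hs, hxs⟩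
    have hctble : (⋃ s ∈ M, U s).Countable :=
      hMc.biUnion (fun s _ => ((hceset s).mono (hUsub s)))
    exact Set.countable_univ_iff.mp (Set.Countable.mono hcover hctble)
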